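/- Let U be a q-periodic evolution family on ℂ^m with exponential growth bound ‖U(t,s)‖ ≤ M e^{ω(t−s)} (t ≥ s ≥ 0, M ≥ 1, ω ∈ ℝ). Then for any μ ∈ ℝ, b ∈ ℂ^m, and t ≥ 0, writing n = ⌊t/q⌋ and r = t − qn, one has the splitting ∫₀^t U(t,s)e^{iμs} b ds = ∫_{qn}^{qn+r} U(t,s)e^{iμs} b ds + U(r,0) Σ_{k=0}^{n−1} e^{iμqk} U(q,0)^{n−k−1} Φ_μ(q) b, where Φ_μ(q) is the matrix integral ∫₀^q U(q,τ)e^{iμτ} dτ; moreover the first term is bounded in norm by qM e^{|ω|q}‖b‖. -/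

import Mathlib

open Matrix intervalIntegral

attribute [local instance] Matrix.linftyOpNormedAddCommGroup Matrix.linftyOpNormedRing
  Matrix.linftyOpNormedAlgebra

/-- Splitting of the solution of the `q`-periodic inhomogeneous Cauchy problem:
with `n = ⌊t/q⌋` and `r = t - qn`,
`∫₀^t U(t,s)e^{iμs} b ds = ∫_{qn}^{t} U(t,s)e^{iμs} b ds
  + U(r,0) Σ_{k=0}^{n-1} e^{iμqk} U(q,0)^{n-k-1} Φ_μ(q) b`,
where `Φ_μ(q) = ∫₀^q e^{iμτ} U(q,τ) dτ`; moreover the first term is bounded in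
norm by `q M e^{|ω| q} ‖b‖`. -/
theorem stmt18 (m : ℕ) (q M ω : ℝ) (hq : 0 < q) (hM : 1 ≤ M)
    (U : ℝ → ℝ → Matrix (Fin m) (Fin m) ℂ)
    (hcont : Continuous fun p : ℝ × ℝ => U p.1 p.2)
    (hid : ∀ t : ℝ, 0 ≤ t → U t t = 1)
    (hcoc : ∀ t s r : ℝ, r ≤ s → s ≤ t → 0 ≤ r → U t s * U s r = U t r)
    (hper : ∀ t s : ℝ, s ≤ t → 0 ≤ s → U (t + q) (s + q) = U t s)
    (hgrowth : ∀ t s : ℝ, s ≤ t → 0 ≤ s → ‖U t s‖ ≤ M * Real.exp (ω * (t - s)))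
    (μ : ℝ) (b : Fin m → ℂ) (t : ℝ) (ht : 0 ≤ t) :
    ((∫ s in (0:ℝ)..t, Complex.exp (Complex.I * μ * s) • (U t s *ᵥ b)) =
      (∫ s in (q * (⌊t / q⌋₊ : ℝ))..t, Complex.exp (Complex.I * μ * s) • (U t s *ᵥ b)) +
        U (t - q * (⌊t / q⌋₊ : ℝ)) 0 *ᵥ
          (∑ k ∈ Finset.range ⌊t / q⌋₊,
            Complex.exp (Complex.I * μ * (q * (k : ℝ))) •
              ((U q 0) ^ (⌊t / q⌋₊ - k - 1) *ᵥ
                ((∫ τ in (0:ℝ)..q, Complex.exp (Complex.I * μ * τ) • U q τ) *ᵥ b)))) ∧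
    ‖∫ s in (q * (⌊t / q⌋₊ : ℝ))..t, Complex.exp (Complex.I * μ * s) • (U t s *ᵥ b)‖ ≤
      q * M * Real.exp (|ω| * q) * ‖b‖ := by
  set n : ℕ := ⌊t / q⌋₊ with hn
  have hqn_le : q * (n : ℝ) ≤ t := by
    have h1 : (n : ℝ) ≤ t / q := Nat.floor_le (div_nonneg ht hq.le)
    have := (le_div_iff₀ hq).mp h1
    linarith
  have ht_lt : t < q * ((n : ℝ) + 1) := by
    have h1 : t / q < (n : ℝ) + 1 := Nat.lt_floor_add_one (t / q)
    have := (div_lt_iff₀ hq).mp h1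
    linarith
  have hr0 : 0 ≤ t - q * (n : ℝ) := by linarith
  have hrq : t - q * (n : ℝ) ≤ q := by linarith
  -- continuity of sections of U
  have hUleft : ∀ a : ℝ, Continuous fun s : ℝ => U a s := by
    intro a
    exact hcont.comp (Continuous.prodMk_right a)
  -- the continuous linear map A ↦ A *ᵥ b
  let Lb : Matrix (Fin m) (Fin m) ℂ →L[ℂ] (Fin m → ℂ) :=
    LinearMap.toContinuousLinearMap
      { toFun := fun A => A *ᵥ b
        map_add' := fun A B => Matrix.add_mulVec A B b
        map_smul' := fun c A => Matrix.smul_mulVec c A b }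
  have hLb : ∀ A : Matrix (Fin m) (Fin m) ℂ, Lb A = A *ᵥ b := fun A => rfl
  -- continuity of the integrands
  have hfc : ∀ a : ℝ, Continuous fun s : ℝ =>
      Complex.exp (Complex.I * μ * s) • (U a s *ᵥ b) := by
    intro a
    apply Continuous.fun_smul
    · exact Complex.continuous_exp.comp (continuous_const.mul Complex.continuous_ofReal)
    · exact Lb.continuous.comp (hUleft a)
  have hInt : ∀ a c : ℝ, IntervalIntegrable
      (fun s => Complex.exp (Complex.I * μ * s) • (U t s *ᵥ b)) MeasureTheory.volume a c :=
    fun a c => (hfc t).intervalIntegrable a c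
  have hMc : Continuous fun τ : ℝ => Complex.exp (Complex.I * μ * τ) • U q τ := by
    apply Continuous.fun_smul
    · exact Complex.continuous_exp.comp (continuous_const.mul Complex.continuous_ofReal)
    · exact hUleft q
  -- shift lemma
  have hshift : ∀ j : ℕ, ∀ a c : ℝ, 0 ≤ c → c ≤ a → U (a + q * j) (c + q * j) = U a c := by
    intro j
    induction j with
    | zero => intro a c _ _; simp
    | succ j ih =>
      intro a c hc hca
      have hqj : (0:ℝ) ≤ q * j := by positivity
      have e1 : a + q * ((j:ℕ) + 1 : ℕ) = (a + q * j) + q := by push_cast; ring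
      have e2 : c + q * ((j:ℕ) + 1 : ℕ) = (c + q * j) + q := by push_cast; ring
      rw [e1, e2, hper _ _ (by linarith) (by linarith), ih a c hc hca]
  -- powers
  have hpow : ∀ j : ℕ, U (q * j) 0 = U q 0 ^ j := by
    intro j
    induction j with
    | zero => simpa using hid 0 le_rfl
    | succ j ih =>
      have hqj : (0:ℝ) ≤ q * j := by positivity
      have h1 : U (q * ((j:ℕ) + 1 : ℕ)) (q * j) * U (q * j) 0 = U (q * ((j:ℕ) + 1 : ℕ)) 0 :=
        hcoc _ _ _ hqj (by push_cast; nlinarith) le_rfl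
      have h2 : U (q * ((j:ℕ) + 1 : ℕ)) (q * j) = U q 0 := by
        have e1 : q * ((j:ℕ) + 1 : ℕ) = q + q * j := by push_cast; ring
        rw [e1]
        simpa using hshift j q 0 le_rfl hq.le
      rw [← h1, h2, ih, ← pow_succ']
  -- decomposition of U t (τ + q k)
  have hUdecomp : ∀ k : ℕ, k < n → ∀ τ : ℝ, 0 ≤ τ → τ ≤ q →
      U t (τ + q * k) = U (t - q * n) 0 * (U q 0 ^ (n - k - 1) * U q τ) := by
    intro k hk τ hτ0 hτq
    have hk1 : (k : ℝ) + 1 ≤ (n : ℝ) := by exact_mod_cast hk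
    set j : ℕ := n - k - 1 with hj
    have hjn : (j : ℕ) + (k + 1) = n := by omega
    have hqn : q * (n : ℝ) = q * (j : ℝ) + q * ((k:ℕ) + 1 : ℕ) := by
      rw [← hjn]; push_cast; ring
    have hqj : (0:ℝ) ≤ q * j := by positivity
    have hA : U t (q * ((k:ℕ) + 1 : ℕ)) * U (q * ((k:ℕ) + 1 : ℕ)) (τ + q * k) = U t (τ + q * k) :=
      hcoc _ _ _ (by push_cast; nlinarith) (by push_cast; nlinarith) (by positivity)
    have hB : U (q * ((k:ℕ) + 1 : ℕ)) (τ + q * k) = U q τ := by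
      have e1 : q * ((k:ℕ) + 1 : ℕ) = q + q * k := by push_cast; ring
      rw [e1]
      exact hshift k q τ hτ0 hτq
    have hC : U t (q * ((k:ℕ) + 1 : ℕ)) = U ((t - q * n) + q * j) 0 := by
      have e : t = ((t - q * n) + q * j) + q * ((k:ℕ) + 1 : ℕ) := by
        rw [hqn]; push_cast; ring
      conv_lhs => rw [e]
      simpa using hshift (k + 1) ((t - q * n) + q * j) 0 le_rfl (by linarith)
    have hD : U ((t - q * n) + q * j) 0 = U (t - q * n) 0 * U (q * j) 0 := by
      have h1 : U ((t - q * n) + q * j) (q * j) * U (q * j) 0 = U ((t - q * n) + q * j) 0 :=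
        hcoc _ _ _ (by positivity) (by linarith) le_rfl
      have h2 : U ((t - q * n) + q * j) (q * j) = U (t - q * n) 0 := by
        simpa using hshift j (t - q * n) 0 le_rfl hr0
      rw [← h1, h2]
    rw [← hA, hB, hC, hD, hpow j, mul_assoc]
  -- the vector-valued Φ
  have hΦ : (∫ τ in (0:ℝ)..q, Complex.exp (Complex.I * μ * τ) • (U q τ *ᵥ b)) =
      (∫ τ in (0:ℝ)..q, Complex.exp (Complex.I * μ * τ) • U q τ) *ᵥ b := by
    rw [← hLb]
    erw [← Lb.intervalIntegral_comp_comm (hMc.intervalIntegrable (μ := MeasureTheory.volume) 0 q)]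
    refine intervalIntegral.integral_congr fun τ _ => ?_
    exact (Matrix.smul_mulVec _ _ _).symm
  -- per-interval computation
  have hk_eq : ∀ k ∈ Finset.range n,
      (∫ s in (q * (k : ℝ))..(q * ((k:ℕ) + 1 : ℕ)),
          Complex.exp (Complex.I * μ * s) • (U t s *ᵥ b)) =
        Complex.exp (Complex.I * μ * (q * (k : ℝ))) •
          (U (t - q * n) 0 *ᵥ ((U q 0) ^ (n - k - 1) *ᵥ
            ((∫ τ in (0:ℝ)..q, Complex.exp (Complex.I * μ * τ) • U q τ) *ᵥ b))) := by
    intro k hk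
    rw [Finset.mem_range] at hk
    have e0 : (q * (k : ℝ)) = 0 + q * k := by ring
    have e1 : (q * ((k:ℕ) + 1 : ℕ) : ℝ) = q + q * k := by push_cast; ring
    rw [e0, e1, ← intervalIntegral.integral_comp_add_right
      (fun s => Complex.exp (Complex.I * μ * s) • (U t s *ᵥ b)) (q * k)]
    -- continuous linear map v ↦ U(t-qn,0) *ᵥ (P^(n-k-1) *ᵥ v)
    let C : Matrix (Fin m) (Fin m) ℂ := U (t - q * n) 0 * (U q 0) ^ (n - k - 1)
    let Lc : (Fin m → ℂ) →L[ℂ] (Fin m → ℂ) := LinearMap.toContinuousLinearMap C.mulVecLin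
    have hLc : ∀ v, Lc v = C *ᵥ v := fun v => rfl
    have key : ∀ τ ∈ Set.uIcc (0:ℝ) q,
        Complex.exp (Complex.I * μ * ((τ + q * (k:ℝ) : ℝ) : ℂ)) • (U t (τ + q * k) *ᵥ b) =
          Complex.exp (Complex.I * μ * (q * (k : ℝ))) •
            (Lc (Complex.exp (Complex.I * μ * τ) • (U q τ *ᵥ b))) := by
      intro τ hτ
      rw [Set.uIcc_of_le hq.le] at hτ
      obtain ⟨hτ0, hτq⟩ := hτ
      have hexp : Complex.exp (Complex.I * μ * ((τ + q * (k:ℝ) : ℝ) : ℂ)) =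
          Complex.exp (Complex.I * μ * (q * (k : ℝ))) * Complex.exp (Complex.I * μ * τ) := by
        rw [← Complex.exp_add]
        congr 1
        push_cast
        ring
      rw [hexp, hUdecomp k hk τ hτ0 hτq, hLc, Matrix.mulVec_smul, ← Matrix.mulVec_mulVec,
        ← Matrix.mulVec_mulVec, ← smul_smul]
      rw [Matrix.mulVec_mulVec]
    rw [intervalIntegral.integral_congr key, intervalIntegral.integral_smul,
      Lc.intervalIntegral_comp_comm
        (((hfc q).intervalIntegrable 0 q)), hΦ, hLc, ← Matrix.mulVec_mulVec]
  -- sum over the intervals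
  have hadj : ∑ k ∈ Finset.range n,
      (∫ s in (q * (k : ℝ))..(q * ((k:ℕ) + 1 : ℕ)),
        Complex.exp (Complex.I * μ * s) • (U t s *ᵥ b)) =
      ∫ s in (0:ℝ)..(q * (n : ℝ)), Complex.exp (Complex.I * μ * s) • (U t s *ᵥ b) := by
    have := intervalIntegral.sum_integral_adjacent_intervals (a := fun k : ℕ => q * k)
      (n := n) (f := fun s => Complex.exp (Complex.I * μ * s) • (U t s *ᵥ b))
      (μ := MeasureTheory.volume) (fun k _ => hInt _ _)
    simpa using this
  have hmain : (∫ s in (0:ℝ)..(q * (n : ℝ)),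
      Complex.exp (Complex.I * μ * s) • (U t s *ᵥ b)) =
      U (t - q * (n : ℝ)) 0 *ᵥ
        (∑ k ∈ Finset.range n,
          Complex.exp (Complex.I * μ * (q * (k : ℝ))) •
            ((U q 0) ^ (n - k - 1) *ᵥ
              ((∫ τ in (0:ℝ)..q, Complex.exp (Complex.I * μ * τ) • U q τ) *ᵥ b))) := by
    rw [← hadj, Finset.sum_congr rfl hk_eq]
    have hms := map_sum (Matrix.mulVecLin (U (t - q * (n:ℝ)) 0))
      (fun k : ℕ => Complex.exp (Complex.I * μ * (q * (k : ℝ))) •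
        ((U q 0) ^ (n - k - 1) *ᵥ
          ((∫ τ in (0:ℝ)..q, Complex.exp (Complex.I * μ * τ) • U q τ) *ᵥ b)))
      (Finset.range n)
    simp only [Matrix.mulVecLin_apply] at hms
    rw [hms]
    exact Finset.sum_congr rfl fun k _ => (Matrix.mulVec_smul _ _ _).symm
  constructor
  · rw [← intervalIntegral.integral_add_adjacent_intervals (hInt 0 (q * n)) (hInt (q * n) t),
      hmain, add_comm]
  · have hC0 : (0:ℝ) ≤ M * Real.exp (|ω| * q) * ‖b‖ := by positivity
    have hb : ‖∫ s in (q * (n : ℝ))..t, Complex.exp (Complex.I * μ * s) • (U t s *ᵥ b)‖ ≤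
        (M * Real.exp (|ω| * q) * ‖b‖) * |t - q * n| := by
      apply intervalIntegral.norm_integral_le_of_norm_le_const
      intro x hx
      rw [Set.uIoc_of_le hqn_le] at hx
      obtain ⟨hx1, hx2⟩ := hx
      rw [norm_smul]
      have hexp1 : ‖Complex.exp (Complex.I * μ * x)‖ = 1 := by
        have e : Complex.I * μ * x = ((μ * x : ℝ) : ℂ) * Complex.I := by push_cast; ring
        rw [e, Complex.norm_exp_ofReal_mul_I]
      rw [hexp1, one_mul]
      have h1 : ‖U t x *ᵥ b‖ ≤ ‖U t x‖ * ‖b‖ := Matrix.linfty_opNorm_mulVec _ _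
      have h2 : ‖U t x‖ ≤ M * Real.exp (ω * (t - x)) :=
        hgrowth t x hx2 (by nlinarith [hx1, mul_nonneg hq.le (Nat.cast_nonneg n)])
      have h3 : Real.exp (ω * (t - x)) ≤ Real.exp (|ω| * q) := by
        apply Real.exp_le_exp.mpr
        have htx0 : 0 ≤ t - x := by linarith
        have htxq : t - x ≤ q := by linarith
        calc ω * (t - x) ≤ |ω| * (t - x) :=
              mul_le_mul_of_nonneg_right (le_abs_self ω) htx0
          _ ≤ |ω| * q := mul_le_mul_of_nonneg_left htxq (abs_nonneg ω)
      calc ‖U t x *ᵥ b‖ ≤ ‖U t x‖ * ‖b‖ := h1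
        _ ≤ (M * Real.exp (ω * (t - x))) * ‖b‖ :=
            mul_le_mul_of_nonneg_right h2 (norm_nonneg b)
        _ ≤ (M * Real.exp (|ω| * q)) * ‖b‖ := by
            have hM0 : (0:ℝ) ≤ M := le_trans zero_le_one hM
            have := mul_le_mul_of_nonneg_left h3 hM0
            exact mul_le_mul_of_nonneg_right this (norm_nonneg b)
    refine hb.trans ?_
    rw [abs_of_nonneg hr0]
    have : (M * Real.exp (|ω| * q) * ‖b‖) * (t - q * n) ≤
        (M * Real.exp (|ω| * q) * ‖b‖) * q := mul_le_mul_of_nonneg_left hrq hC0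
    linarith
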